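/- Let $G$ be a mixed graph with directed and bidirected edges (no undirected edges), and let $\widetilde{G}$ be its canonical DAG, obtained by replacing each bidirected edge $i \leftrightarrow j$ by a new vertex $v_{i,j}$ with directed edges $v_{i,j}\to i$ and $v_{i,j}\to j$. Then for any vertex sets $A, B \subseteq V(G)$ and any $r$: there exists a pair $(C_L, C_R)$ of subsets of $V(G)$ with $\#C_L + \#C_R \le r$ trek-separating $A$ from $B$ in $G$ if and only if there exists a pair $(D_L, D_R)$ of subsets of $V(\widetilde G)$ with $\#D_L + \#D_R \le r$ trek-separating $A$ from $B$ in $\widetilde{G}$. -/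

import Mathlib

/-- A directed path, as the list of its vertices, from `i` to `j`. -/
def IsPath {V : Type*} (E : V → V → Prop) (p : List V) (i j : V) : Prop :=
  p.head? = some i ∧ p.getLast? = some j ∧ p.Chain' E

/-- Trek separation in a directed graph: `(C_A, C_B)` trek-separates `A` from `B`
if every trek (pair of directed paths with a common source) from `A` to `B` has its
`A`-side path meeting `C_A` or its `B`-side path meeting `C_B`. -/
def TSep {V : Type*} (E : V → V → Prop) (A B CA CB : Finset V) : Prop :=
  ∀ a ∈ A, ∀ b ∈ B, ∀ P₁ P₂ : List V,
    (∃ k, IsPath E P₁ k a ∧ IsPath E P₂ k b) →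
    (∃ v ∈ CA, v ∈ P₁) ∨ (∃ v ∈ CB, v ∈ P₂)

/-- Trek separation in a mixed graph with directed edges `Dir` and bidirected edges
`Bi` (no undirected edges): every trek `(P_L, P_M, P_R)` — `P_L, P_R` directed paths
into `A`, `B` whose sources either coincide or are joined by a bidirected edge — has
`P_L` meeting `C_L` or `P_R` meeting `C_R`. -/
def MixedTSep2 {V : Type*} (Dir Bi : V → V → Prop) (A B CL CR : Finset V) : Prop :=
  ∀ a ∈ A, ∀ b ∈ B, ∀ (PL PR : List V) (sL sR : V),
    IsPath Dir PL sL a → IsPath Dir PR sR b → (sL = sR ∨ Bi sL sR) →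
    (∃ v ∈ CL, v ∈ PL) ∨ (∃ v ∈ CR, v ∈ PR)

/-- The edge relation of the canonical DAG `G̃` of a mixed graph with directed and
bidirected edges: each bidirected edge `i ↔ j` is replaced by a new vertex
`v_{i,j}` with edges `v_{i,j} → i` and `v_{i,j} → j`. -/
def CanonDAG {m : ℕ} (Dir Bi : Fin m → Fin m → Prop) :
    (Fin m ⊕ Sym2 (Fin m)) → (Fin m ⊕ Sym2 (Fin m)) → Prop
  | .inl a, .inl b => Dir a b
  | .inr e, .inl a => a ∈ e ∧ ∃ x y : Fin m, e = s(x, y) ∧ Bi x y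
  | _, _ => False

/-!
A trek of `G̃` between original vertices is a trek of `G`: its source is either an original
vertex, or a subdivision vertex `v_{i,j}` whose two out-edges start the legs of a trek of `G`
with top edge `i ↔ j`. Hence separating pairs of original vertices are the same in `G` and `G̃`.
A subdivision vertex `v_{i,j}` in a separating pair of `G̃` can be replaced by `i` or by `j`;
since `v_{i,j}` is a source, this is a statement about a source with two out-neighbours in an
arbitrary digraph. Replacing the subdivision vertices one at a time gives a separating pair of
original vertices that is no larger.
-/

namespace IsPath

variable {V : Type*} {E : V → V → Prop} {P : List V} {k a w : V}

theorem head_mem (h : IsPath E P k a) : k ∈ P :=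
  List.mem_of_mem_head? h.1

theorem cons {i : V} (hk : E k i) (h : IsPath E P i a) : IsPath E (k :: P) k a := by
  obtain ⟨hh, hl, hc : P.IsChain E⟩ := h
  match P, hh, hl, hc with
  | _ :: _, rfl, hl, hc =>
    exact ⟨rfl, by rwa [List.getLast?_cons_cons], List.isChain_cons_cons.2 ⟨hk, hc⟩⟩

theorem eq_singleton_or_eq_cons (h : IsPath E P k a) :
    (P = [k] ∧ k = a) ∨ ∃ i P', P = k :: P' ∧ E k i ∧ IsPath E P' i a := by
  obtain ⟨hh, hl, hc : P.IsChain E⟩ := h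
  match P, hh, hl, hc with
  | [_], rfl, hl, _ => exact Or.inl ⟨rfl, by simpa using hl⟩
  | k :: i :: P', rfl, hl, hc =>
    rw [List.isChain_cons_cons] at hc
    exact Or.inr ⟨i, i :: P', rfl, hc.1, rfl, by rwa [List.getLast?_cons_cons] at hl, hc.2⟩

theorem exists_eq_cons (h : IsPath E P k a) (hka : k ≠ a) :
    ∃ i P', P = k :: P' ∧ E k i ∧ IsPath E P' i a :=
  h.eq_singleton_or_eq_cons.resolve_left fun h => hka h.2

theorem eq_of_mem_of_source (h : IsPath E P k a) (hw : w ∈ P) (hsrc : ∀ u, ¬E u w) :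
    w = k := by
  induction P generalizing k with
  | nil => simp at hw
  | cons x P ih =>
    rcases h.eq_singleton_or_eq_cons with ⟨hP, -⟩ | ⟨i, P', hP, hki, hP'⟩
    · simpa [hP] using hw
    · obtain ⟨rfl, rfl⟩ := List.cons_eq_cons.1 hP
      rcases List.mem_cons.1 hw with rfl | hw
      · rfl
      · exact absurd (ih hP' hw ▸ hki) (hsrc _)

end IsPath

theorem TSep.symm {V : Type*} {E : V → V → Prop} {A B CA CB : Finset V}
    (h : TSep E A B CA CB) : TSep E B A CB CA := fun b hb a ha P₂ P₁ ⟨k, h₂, h₁⟩ =>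
  (h a ha b hb P₁ P₂ ⟨k, h₁, h₂⟩).symm

section Replacement

variable {V : Type*} [DecidableEq V] {E : V → V → Prop} {A B D DR : Finset V} {w : V}

theorem exists_trek_of_not_tsep_insert {z : V} (hsrc : ∀ u, ¬E u w) (hA : w ∉ A) (hB : w ∉ B)
    (hsep : TSep E A B (insert w D) DR) (hz : ¬TSep E A B (insert z D) DR) :
    ∃ a ∈ A, ∃ b ∈ B, ∃ i j : V, ∃ q p : List V, E w i ∧ E w j ∧
      IsPath E q i a ∧ IsPath E p j b ∧ z ∉ q ∧
      (¬∃ v ∈ insert w D, v ∈ q) ∧ ¬∃ v ∈ DR, v ∈ p := by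
  simp only [TSep, not_forall, not_or] at hz
  obtain ⟨a, ha, b, hb, P₁, P₂, ⟨k, h₁, h₂⟩, hL, hR⟩ := hz
  have hw : w ∈ P₁ := by
    rcases hsep a ha b hb P₁ P₂ ⟨k, h₁, h₂⟩ with ⟨v, hv, hvP⟩ | hR'
    · rcases Finset.mem_insert.1 hv with rfl | hv
      · exact hvP
      · exact absurd ⟨v, Finset.mem_insert_of_mem hv, hvP⟩ hL
    · exact absurd hR' hR
  obtain rfl := h₁.eq_of_mem_of_source hw hsrc
  obtain ⟨i, q, rfl, hwi, hq⟩ := h₁.exists_eq_cons (ne_of_mem_of_not_mem ha hA).symm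
  obtain ⟨j, p, rfl, hwj, hp⟩ := h₂.exists_eq_cons (ne_of_mem_of_not_mem hb hB).symm
  refine ⟨a, ha, b, hb, i, j, q, p, hwi, hwj, hq, hp, ?_, ?_, ?_⟩
  · exact fun hzq => hL ⟨z, Finset.mem_insert_self z D, List.mem_cons_of_mem w hzq⟩
  · rintro ⟨v, hv, hvq⟩
    rcases Finset.mem_insert.1 hv with rfl | hv
    · exact hsrc v (hq.eq_of_mem_of_source hvq hsrc ▸ hwi)
    · exact hL ⟨v, Finset.mem_insert_of_mem hv, List.mem_cons_of_mem w hvq⟩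
  · exact fun ⟨v, hv, hvp⟩ => hR ⟨v, hv, List.mem_cons_of_mem w hvp⟩

/-- If both replacements failed, there would be unseparated treks from `w` whose left legs
continue through `y` and through `x` respectively; the right leg of the first continues
through `x` or `y`, and with the left leg through the same vertex it forms a trek missing
`(insert w D, DR)`. -/
theorem TSep.replace_source {x y : V} (hsrc : ∀ u, ¬E u w)
    (hout : ∀ u, E w u → u = x ∨ u = y) (hA : w ∉ A) (hB : w ∉ B)
    (hsep : TSep E A B (insert w D) DR) :
    TSep E A B (insert x D) DR ∨ TSep E A B (insert y D) DR := by
  by_contra! ⟨hx, hy⟩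
  obtain ⟨a, ha, b, hb, i, j, q, p, hwi, hwj, hq, hp, hxq, hqD, hpR⟩ :=
    exists_trek_of_not_tsep_insert hsrc hA hB hsep hx
  obtain ⟨a', ha', -, -, i', -, q', -, hwi', -, hq', -, hyq', hqD', -⟩ :=
    exists_trek_of_not_tsep_insert hsrc hA hB hsep hy
  have hiy : i = y := (hout i hwi).resolve_left (ne_of_mem_of_not_mem hq.head_mem hxq)
  have hix : i' = x := (hout i' hwi').resolve_right (ne_of_mem_of_not_mem hq'.head_mem hyq')
  rcases hout j hwj with rfl | rfl
  · exact (hsep a' ha' b hb q' p ⟨j, hix ▸ hq', hp⟩).elim hqD' hpR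
  · exact (hsep a ha b hb q p ⟨j, hiy ▸ hq, hp⟩).elim hqD hpR

end Replacement

section CanonDAG

open Sum

variable {m : ℕ} {Dir Bi : Fin m → Fin m → Prop}

theorem not_canonDAG_inr (u : Fin m ⊕ Sym2 (Fin m)) (e : Sym2 (Fin m)) :
    ¬CanonDAG Dir Bi u (inr e) := by
  cases u <;> exact id

theorem eq_or_eq_of_canonDAG_inr {x y : Fin m} {u : Fin m ⊕ Sym2 (Fin m)}
    (h : CanonDAG Dir Bi (inr s(x, y)) u) : u = inl x ∨ u = inl y := by
  cases u with
  | inl i => simpa using Sym2.mem_iff.1 h.1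
  | inr e => exact h.elim

theorem eq_or_bi_of_canonDAG_inr (hBi : ∀ i j, Bi i j → Bi j i) {e : Sym2 (Fin m)} {i j : Fin m}
    (hi : CanonDAG Dir Bi (inr e) (inl i)) (hj : CanonDAG Dir Bi (inr e) (inl j)) :
    i = j ∨ Bi i j := by
  obtain ⟨hi, x, y, rfl, hxy⟩ := hi
  rcases Sym2.mem_iff.1 hi with rfl | rfl <;> rcases Sym2.mem_iff.1 hj.1 with rfl | rfl
  exacts [Or.inl rfl, Or.inr hxy, Or.inr (hBi _ _ hxy), Or.inl rfl]

theorem isPath_canonDAG_map_inl {q : List (Fin m)} {i a : Fin m} (h : IsPath Dir q i a) :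
    IsPath (CanonDAG Dir Bi) (q.map inl) (inl i) (inl a) := by
  obtain ⟨hh, hl, hc : q.IsChain Dir⟩ := h
  exact ⟨by simp [hh], by simp [hl], (List.isChain_map inl).2 hc⟩

theorem IsPath.exists_eq_map_inl {P : List (Fin m ⊕ Sym2 (Fin m))} {i a : Fin m}
    (h : IsPath (CanonDAG Dir Bi) P (inl i) (inl a)) :
    ∃ q, P = q.map inl ∧ IsPath Dir q i a := by
  induction P generalizing i with
  | nil => simp [IsPath] at h
  | cons x P ih =>
    rcases h.eq_singleton_or_eq_cons with ⟨hP, hia⟩ | ⟨v, P', hP, hv, hP'⟩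
    · obtain ⟨rfl, rfl⟩ := List.cons_eq_cons.1 hP
      obtain rfl := inl_injective hia
      exact ⟨[i], rfl, rfl, rfl, List.IsChain.singleton i⟩
    obtain ⟨rfl, rfl⟩ := List.cons_eq_cons.1 hP
    cases v with
    | inr e => exact absurd hv (not_canonDAG_inr _ e)
    | inl j =>
      obtain ⟨q, rfl, hq⟩ := ih hP'
      exact ⟨i :: q, rfl, hq.cons hv⟩

theorem IsPath.exists_canonDAG {P : List (Fin m ⊕ Sym2 (Fin m))} {k : Fin m ⊕ Sym2 (Fin m)}
    {a : Fin m} (h : IsPath (CanonDAG Dir Bi) P k (inl a)) :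
    ∃ i q, IsPath Dir q i a ∧ (∀ v, inl v ∈ P ↔ v ∈ q) ∧
      (k = inl i ∨ ∃ e, k = inr e ∧ CanonDAG Dir Bi (inr e) (inl i)) := by
  cases k with
  | inl i =>
    obtain ⟨q, rfl, hq⟩ := h.exists_eq_map_inl
    exact ⟨i, q, hq, by simp, Or.inl rfl⟩
  | inr e =>
    obtain ⟨u, P', rfl, hu, hP'⟩ := h.exists_eq_cons inr_ne_inl
    cases u with
    | inr e' => exact absurd hu (not_canonDAG_inr _ e')
    | inl i =>
      obtain ⟨q, rfl, hq⟩ := hP'.exists_eq_map_inl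
      exact ⟨i, q, hq, by simp, Or.inr ⟨e, rfl, hu⟩⟩

theorem exists_trek_canonDAG {PL PR : List (Fin m)} {sL sR a b : Fin m}
    (hL : IsPath Dir PL sL a) (hR : IsPath Dir PR sR b) (hs : sL = sR ∨ Bi sL sR) :
    ∃ k P₁ P₂, IsPath (CanonDAG Dir Bi) P₁ k (inl a) ∧
      IsPath (CanonDAG Dir Bi) P₂ k (inl b) ∧
      (∀ v, inl v ∈ P₁ ↔ v ∈ PL) ∧ ∀ v, inl v ∈ P₂ ↔ v ∈ PR := by
  rcases hs with rfl | hs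
  · exact ⟨_, _, _, isPath_canonDAG_map_inl hL, isPath_canonDAG_map_inl hR, by simp, by simp⟩
  · have hedge (i : Fin m) (hi : i ∈ s(sL, sR)) : CanonDAG Dir Bi (inr s(sL, sR)) (inl i) :=
      ⟨hi, sL, sR, rfl, hs⟩
    exact ⟨_, _, _, (isPath_canonDAG_map_inl hL).cons (hedge sL (Sym2.mem_mk_left _ _)),
      (isPath_canonDAG_map_inl hR).cons (hedge sR (Sym2.mem_mk_right _ _)), by simp, by simp⟩

theorem exists_mem_map_inl_iff {P : List (Fin m ⊕ Sym2 (Fin m))} {q : List (Fin m)}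
    {C : Finset (Fin m)} (hP : ∀ v, inl v ∈ P ↔ v ∈ q) :
    (∃ v ∈ C.map Function.Embedding.inl, v ∈ P) ↔ ∃ v ∈ C, v ∈ q := by
  simp [hP]

end CanonDAG

section Separation

open Sum Function

variable {m : ℕ} {Dir Bi : Fin m → Fin m → Prop} {A B : Finset (Fin m)}

theorem MixedTSep2.tsep_canonDAG (hBi : ∀ i j, Bi i j → Bi j i) {CL CR : Finset (Fin m)}
    (h : MixedTSep2 Dir Bi A B CL CR) :
    TSep (CanonDAG Dir Bi) (A.image inl) (B.image inl) (CL.map Embedding.inl)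
      (CR.map Embedding.inl) := by
  rintro _ ha' _ hb' P₁ P₂ ⟨k, h₁, h₂⟩
  obtain ⟨a, ha, rfl⟩ := Finset.mem_image.1 ha'
  obtain ⟨b, hb, rfl⟩ := Finset.mem_image.1 hb'
  obtain ⟨i, q, hq, hqP, hk⟩ := h₁.exists_canonDAG
  obtain ⟨j, p, hp, hpP, hk'⟩ := h₂.exists_canonDAG
  have hij : i = j ∨ Bi i j := by
    rcases hk with rfl | ⟨e, rfl, hi⟩ <;> rcases hk' with hk' | ⟨e', hk', hj⟩
    · exact Or.inl (inl_injective hk')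
    · exact absurd hk' inl_ne_inr
    · exact absurd hk' inr_ne_inl
    · exact eq_or_bi_of_canonDAG_inr hBi hi (inr_injective hk' ▸ hj)
  rw [exists_mem_map_inl_iff hqP, exists_mem_map_inl_iff hpP]
  exact h a ha b hb q p i j hq hp hij

theorem mixedTSep2_of_tsep_canonDAG {CL CR : Finset (Fin m)}
    (h : TSep (CanonDAG Dir Bi) (A.image inl) (B.image inl) (CL.map Embedding.inl)
      (CR.map Embedding.inl)) :
    MixedTSep2 Dir Bi A B CL CR := by
  intro a ha b hb PL PR sL sR hL hR hs
  obtain ⟨k, P₁, P₂, h₁, h₂, hP₁, hP₂⟩ := exists_trek_canonDAG hL hR hs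
  rw [← exists_mem_map_inl_iff hP₁, ← exists_mem_map_inl_iff hP₂]
  exact h _ (Finset.mem_image_of_mem _ ha) _ (Finset.mem_image_of_mem _ hb) P₁ P₂
    ⟨k, h₁, h₂⟩

theorem TSep.exists_map_inl_of_disjSum (S : Finset (Sym2 (Fin m))) {C : Finset (Fin m)}
    {DR : Finset (Fin m ⊕ Sym2 (Fin m))}
    (h : TSep (CanonDAG Dir Bi) (A.image inl) (B.image inl) (C.disjSum S) DR) :
    ∃ C' : Finset (Fin m), C'.card ≤ C.card + S.card ∧
      TSep (CanonDAG Dir Bi) (A.image inl) (B.image inl) (C'.map Embedding.inl) DR := by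
  induction S using Finset.induction_on generalizing C with
  | empty => exact ⟨C, by simp, by rwa [Finset.disjSum_empty] at h⟩
  | insert e S he ih =>
    induction e using Sym2.ind with
    | _ x y =>
    have hS : C.disjSum (insert s(x, y) S) = insert (inr s(x, y)) (C.disjSum S) := by
      ext v; cases v <;> simp
    have hC (z : Fin m) : insert (inl z) (C.disjSum S) = (insert z C).disjSum S := by
      ext v; cases v <;> simp
    have hreplace (z : Fin m)
        (hz : TSep (CanonDAG Dir Bi) (A.image inl) (B.image inl) (insert (inl z) (C.disjSum S))
          DR) :
        ∃ C' : Finset (Fin m), C'.card ≤ C.card + (insert s(x, y) S).card ∧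
          TSep (CanonDAG Dir Bi) (A.image inl) (B.image inl) (C'.map Embedding.inl) DR := by
      obtain ⟨C', hC', hsep⟩ := ih (hC z ▸ hz)
      refine ⟨C', ?_, hsep⟩
      have := Finset.card_insert_le z C
      rw [Finset.card_insert_of_notMem he]
      omega
    rw [hS] at h
    rcases h.replace_source (not_canonDAG_inr · _) (fun _ => eq_or_eq_of_canonDAG_inr)
      (by simp) (by simp) with h | h
    exacts [hreplace x h, hreplace y h]

theorem TSep.exists_map_inl_left {DL DR : Finset (Fin m ⊕ Sym2 (Fin m))}
    (h : TSep (CanonDAG Dir Bi) (A.image inl) (B.image inl) DL DR) :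
    ∃ C : Finset (Fin m), C.card ≤ DL.card ∧
      TSep (CanonDAG Dir Bi) (A.image inl) (B.image inl) (C.map Embedding.inl) DR := by
  rw [← Finset.toLeft_disjSum_toRight (u := DL)] at h
  rw [← Finset.card_toLeft_add_card_toRight (u := DL)]
  exact h.exists_map_inl_of_disjSum _

theorem TSep.exists_map_inl {DL DR : Finset (Fin m ⊕ Sym2 (Fin m))}
    (h : TSep (CanonDAG Dir Bi) (A.image inl) (B.image inl) DL DR) :
    ∃ CL CR : Finset (Fin m), CL.card + CR.card ≤ DL.card + DR.card ∧
      TSep (CanonDAG Dir Bi) (A.image inl) (B.image inl) (CL.map Embedding.inl)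
        (CR.map Embedding.inl) := by
  obtain ⟨CL, hCL, hL⟩ := h.exists_map_inl_left
  obtain ⟨CR, hCR, hR⟩ := hL.symm.exists_map_inl_left
  exact ⟨CL, CR, by omega, hR.symm⟩

end Separation

theorem stmt16_general (m : ℕ) (Dir Bi : Fin m → Fin m → Prop)
    (hBi : ∀ i j : Fin m, Bi i j → Bi j i)
    (A B : Finset (Fin m)) (r : ℕ) :
    (∃ CL CR : Finset (Fin m), CL.card + CR.card ≤ r
        ∧ MixedTSep2 Dir Bi A B CL CR)
    ↔ ∃ DL DR : Finset (Fin m ⊕ Sym2 (Fin m)), DL.card + DR.card ≤ r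
        ∧ TSep (CanonDAG Dir Bi) (A.image Sum.inl) (B.image Sum.inl) DL DR := by
  constructor
  · rintro ⟨CL, CR, hr, h⟩
    exact ⟨_, _, by simpa using hr, h.tsep_canonDAG hBi⟩
  · rintro ⟨DL, DR, hr, h⟩
    obtain ⟨CL, CR, hC, hsep⟩ := h.exists_map_inl
    exact ⟨CL, CR, hC.trans hr, mixedTSep2_of_tsep_canonDAG hsep⟩

/-- **Trek separation and the canonical DAG.** For a mixed graph `G` with directed
and bidirected edges and its canonical DAG `G̃`: there is a pair `(C_L, C_R)` of
subsets of `V(G)` with `#C_L + #C_R ≤ r` trek-separating `A` from `B` in `G` iff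
there is a pair `(D_L, D_R)` of subsets of `V(G̃)` with `#D_L + #D_R ≤ r`
trek-separating `A` from `B` in `G̃`. -/
theorem stmt16 (m : ℕ) (Dir Bi : Fin m → Fin m → Prop)
    (hDir : ∀ i j : Fin m, Dir i j → i < j)
    (hBi : ∀ i j : Fin m, Bi i j → Bi j i)
    (A B : Finset (Fin m)) (r : ℕ) :
    (∃ CL CR : Finset (Fin m), CL.card + CR.card ≤ r
        ∧ MixedTSep2 Dir Bi A B CL CR)
    ↔ ∃ DL DR : Finset (Fin m ⊕ Sym2 (Fin m)), DL.card + DR.card ≤ r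
        ∧ TSep (CanonDAG Dir Bi) (A.image Sum.inl) (B.image Sum.inl) DL DR :=
  stmt16_general m Dir Bi hBi A B r
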